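/- arXiv:2002.09382 — 5 statements merged into one kernel-verified Lean document; each statement's English description precedes it below -/
import Mathlib

section
/- Let m(N) = N/2 + log₂ C(N, ⌊N/2⌋) be the number of bits per symbol of the optimal OFDM-IM configuration. If T : ℕ → ℝ is any function satisfying T(N) ≥ m(N) − 1 for all N (any mapper implementation must at least read its m(N)-bit input), then there exist a constant c > 0 and an index N₀ such that T(N) ≥ c·N for all N ≥ N₀; moreover one may take c = 5/4. Hence under the optimal spectral-efficiency setup (g = 1, k = N/2, M = 2) the OFDM-IM mapping complexity lower bound is Ω(N), the same as that of the classic OFDM mapper. -/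
/-! Since `C(N, ⌊N/2⌋)` is the largest of the `N + 1` binomial coefficients summing to `2 ^ N`,
`log₂ C(N, ⌊N/2⌋) ≥ N - log₂ (N + 1)`. Hence `m(N) - 1 ≥ 3N/2 - log₂ (2(N + 1))`, and the
logarithmic term is at most `N/4` once `N ≥ 48`. -/

open Real

theorem Nat.two_pow_le_succ_mul_choose_half (n : ℕ) : 2 ^ n ≤ (n + 1) * n.choose (n / 2) :=
  calc 2 ^ n = ∑ i ∈ Finset.range (n + 1), n.choose i := (Nat.sum_range_choose n).symm
    _ ≤ ∑ _i ∈ Finset.range (n + 1), n.choose (n / 2) :=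
        Finset.sum_le_sum fun i _ => Nat.choose_le_middle i n
    _ = (n + 1) * n.choose (n / 2) := by simp

theorem Real.sub_logb_succ_le_logb_choose_half (n : ℕ) :
    (n : ℝ) - logb 2 (n + 1) ≤ logb 2 (n.choose (n / 2)) := by
  have hchoose : (0 : ℝ) < n.choose (n / 2) := mod_cast Nat.choose_pos (Nat.div_le_self n 2)
  have hpow : (2 : ℝ) ^ n ≤ (n + 1) * n.choose (n / 2) :=
    mod_cast Nat.two_pow_le_succ_mul_choose_half n
  have := logb_le_logb_of_le one_lt_two (by positivity) hpow
  rw [logb_mul (by positivity) hchoose.ne', logb_pow, logb_self_eq_one one_lt_two, mul_one]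
    at this
  linarith

theorem Nat.eight_mul_add_eight_le_two_pow {k : ℕ} (hk : 6 ≤ k) : 8 * k + 8 ≤ 2 ^ k := by
  induction k, hk using Nat.le_induction with
  | base => norm_num
  | succ k _ ih => rw [pow_succ]; omega

theorem Real.logb_two_mul_succ_le_div_four {n : ℕ} (hn : 48 ≤ n) :
    logb 2 (2 * (n + 1)) ≤ n / 4 := by
  have hpow : 2 * (n + 1) ≤ 2 ^ (n / 4) :=
    (by omega : 2 * (n + 1) ≤ 8 * (n / 4) + 8).trans
      (Nat.eight_mul_add_eight_le_two_pow (by omega))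
  have hdiv : ((n / 4 : ℕ) : ℝ) ≤ n / 4 := Nat.cast_div_le
  calc logb 2 (2 * (n + 1)) ≤ logb 2 ((2 : ℝ) ^ (n / 4)) :=
        logb_le_logb_of_le one_lt_two (by positivity) (mod_cast hpow)
    _ = ((n / 4 : ℕ) : ℝ) := by rw [logb_pow, logb_self_eq_one one_lt_two, mul_one]
    _ ≤ n / 4 := hdiv

/-- Under the optimal spectral-efficiency setup (`g = 1`, `k = ⌊N/2⌋`, `M = 2`),
with `m(N) = N/2 + log₂ C(N, ⌊N/2⌋)` bits per symbol, any mapper whose cost satisfies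
`T(N) ≥ m(N) − 1` (it must at least read its input) obeys the lower bound `T(N) = Ω(N)`;
moreover one may take the constant `c = 5/4`. -/
theorem ofdm_im_mapper_lower_bound_omega_N
    (m : ℕ → ℝ) (hm : ∀ N : ℕ, m N = (N : ℝ) / 2 + Real.logb 2 (N.choose (N / 2)))
    (T : ℕ → ℝ) (hT : ∀ N : ℕ, T N ≥ m N - 1) :
    (∃ c : ℝ, 0 < c ∧ ∃ N₀ : ℕ, ∀ N : ℕ, N₀ ≤ N → T N ≥ c * N) ∧
    (∃ N₀ : ℕ, ∀ N : ℕ, N₀ ≤ N → T N ≥ (5 / 4) * N) := by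
  have key : ∀ N : ℕ, 48 ≤ N → T N ≥ (5 / 4) * N := by
    intro N hN
    have hchoose := sub_logb_succ_le_logb_choose_half N
    have hlog := logb_two_mul_succ_le_div_four hN
    rw [logb_mul two_ne_zero (by positivity), logb_self_eq_one one_lt_two] at hlog
    linarith [hT N, hm N]
  exact ⟨⟨5 / 4, by norm_num, 48, key⟩, 48, key⟩
end

section
/- Let M ≥ 2 be a fixed constellation size and let k : ℕ → ℕ satisfy k(N) ≤ N for all N and lim_{N→∞} k(N)/N = 0 (i.e., k = o(N)). Then the per-subcarrier number of bits of the corresponding OFDM-IM configuration tends to zero: lim_{N→∞} [ k(N)·log₂ M + log₂ C(N, k(N)) ] / N = 0. In particular, such a configuration cannot attain the maximal asymptotic spectral-efficiency gain 3/2 over BPSK-OFDM, which is achieved only with k = N/2 and M = 2. -/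
/-!
Since `C(N, k) ≤ N^k / k!` and `k! ≥ (k / e)^k`, the index bits per subcarrier satisfy
`log C(N, k) / N ≤ H(k / N) + k / N` with `H(x) = -x log x`. Together with the `(k / N) log₂ M`
modulation bits, the bits per subcarrier are bounded by a continuous function of `k / N`
vanishing at `0`.
-/

open Filter Real
open scoped Nat

lemma Real.mul_log_sub_le_log_factorial (n : ℕ) : n * log n - n ≤ log n ! := by
  rcases Nat.eq_zero_or_pos n with rfl | hn
  · simp
  have h := log_le_log (by positivity) (pow_div_factorial_le_exp _ (Nat.cast_nonneg n) n)
  rw [log_div (by positivity) (by positivity), log_pow, log_exp] at h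
  linarith

lemma Real.log_choose_le {N k : ℕ} (hkN : k ≤ N) :
    log (N.choose k) ≤ N * (negMulLog (k / N) + k / N) := by
  rcases Nat.eq_zero_or_pos k with rfl | hk
  · simp
  have hN : (0 : ℝ) < N := by exact_mod_cast hk.trans_le hkN
  have hchoose : log (N.choose k) ≤ k * log N - log k ! := by
    rw [← log_pow, ← log_div (by positivity) (by positivity)]
    exact log_le_log (by exact_mod_cast Nat.choose_pos hkN) (Nat.choose_le_pow_div k N)
  have hx : N * (negMulLog (k / N) + k / N) = k * log N - (k * log k - k) := by
    rw [negMulLog, log_div (by positivity) hN.ne']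
    field_simp
    ring
  rw [hx]
  linarith [Real.mul_log_sub_le_log_factorial k]

lemma eventually_le_of_tendsto_div_atTop_zero {k : ℕ → ℕ}
    (hk : Tendsto (fun N : ℕ => (k N : ℝ) / N) atTop (nhds 0)) : ∀ᶠ N in atTop, k N ≤ N := by
  filter_upwards [hk.eventually (gt_mem_nhds one_pos), eventually_gt_atTop 0] with N hlt hN
  rw [div_lt_one (by exact_mod_cast hN)] at hlt
  exact_mod_cast hlt.le

section OFDMIM

variable (M : ℕ)

lemma ofdmIM_bits_div_nonneg (N k : ℕ) :
    0 ≤ ((k : ℝ) * logb 2 M + logb 2 (N.choose k)) / N := by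
  have hlogb (n : ℕ) : 0 ≤ logb 2 n := div_nonneg (log_natCast_nonneg n) (log_nonneg one_le_two)
  have := hlogb M
  have := hlogb (N.choose k)
  positivity

lemma ofdmIM_bits_div_le {N k : ℕ} (hkN : k ≤ N) :
    ((k : ℝ) * logb 2 M + logb 2 (N.choose k)) / N ≤
      k / N * logb 2 M + (negMulLog (k / N) + k / N) / log 2 := by
  rcases Nat.eq_zero_or_pos N with rfl | hN
  · simp
  have hN' : (0 : ℝ) < N := by exact_mod_cast hN
  have hindex : logb 2 (N.choose k) / N ≤ (negMulLog (k / N) + k / N) / log 2 := by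
    rw [logb, div_div, mul_comm, ← div_div]
    gcongr
    rw [div_le_iff₀ hN', mul_comm]
    exact Real.log_choose_le hkN
  rw [add_div, mul_div_right_comm]
  gcongr

end OFDMIM

theorem ofdm_im_sublinear_k_vanishing_spectral_efficiency_general
    (M : ℕ) (k : ℕ → ℕ)
    (hko : Tendsto (fun N : ℕ => (k N : ℝ) / N) atTop (nhds 0)) :
    Tendsto (fun N : ℕ =>
        ((k N : ℝ) * Real.logb 2 M + Real.logb 2 (N.choose (k N))) / N)
      atTop (nhds 0) := by
  set bound : ℝ → ℝ := fun x => x * logb 2 M + (negMulLog x + x) / log 2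
  have hbound : Tendsto (fun N : ℕ => bound ((k N : ℝ) / N)) atTop (nhds 0) := by
    have hcont : Continuous bound := by fun_prop
    exact (hcont.tendsto' 0 0 (by simp [bound])).comp hko
  refine squeeze_zero' (Eventually.of_forall fun N => ofdmIM_bits_div_nonneg M N (k N)) ?_ hbound
  filter_upwards [eventually_le_of_tendsto_div_atTop_zero hko] with N hkN
  exact ofdmIM_bits_div_le M hkN

/-- If the number of active subcarriers satisfies `k = o(N)`, then the per-subcarrier
number of bits of the corresponding OFDM-IM configuration tends to zero:
`lim_{N→∞} [k(N)·log₂ M + log₂ C(N, k(N))] / N = 0`. -/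
theorem ofdm_im_sublinear_k_vanishing_spectral_efficiency
    (M : ℕ) (hM : 2 ≤ M) (k : ℕ → ℕ) (hk : ∀ N : ℕ, k N ≤ N)
    (hko : Tendsto (fun N : ℕ => (k N : ℝ) / N) atTop (nhds 0)) :
    Tendsto (fun N : ℕ =>
        ((k N : ℝ) * Real.logb 2 M + Real.logb 2 (N.choose (k N))) / N)
      atTop (nhds 0) :=
  ofdm_im_sublinear_k_vanishing_spectral_efficiency_general M k hko
end

section
/- Let m(N) = N/2 + log₂ C(N, ⌊N/2⌋) be the number of bits per symbol of the optimal OFDM-IM configuration, and let T : ℕ → ℝ be a function with T(N) > 0 for all N. If liminf_{N→∞} m(N)/T(N) > 0 (the spectro-computational throughput does not vanish), then T(N) = O(N), i.e. there exist a constant C > 0 and an index N₀ such that T(N) ≤ C·N for all N ≥ N₀. -/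
/-!
Since `C(N, ⌊N/2⌋) ≤ 2^N`, the number of bits satisfies `0 ≤ m(N) ≤ 3N/2`. A liminf `c > 0` of
`m(N)/T(N)` gives `c/2 · T(N) < m(N)` for all large `N`, hence `T(N) ≤ (3/c) · N`.
-/

open Filter

theorem Real.logb_two_natCast_choose_nonneg (n k : ℕ) : 0 ≤ Real.logb 2 (n.choose k) :=
  div_nonneg (Real.log_natCast_nonneg _) (Real.log_nonneg one_le_two)

theorem Real.logb_two_natCast_choose_le (n k : ℕ) : Real.logb 2 (n.choose k) ≤ n := by
  rcases Nat.eq_zero_or_pos (n.choose k) with hzero | hpos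
  · simp [hzero]
  · calc Real.logb 2 (n.choose k) ≤ Real.logb 2 (2 ^ n) :=
          Real.logb_le_logb_of_le one_lt_two (by exact_mod_cast hpos)
            (by exact_mod_cast Nat.choose_le_two_pow n k)
      _ = n := by rw [Real.logb_pow, Real.logb_self_eq_one one_lt_two, mul_one]

theorem exists_le_mul_of_liminf_div_pos {m T g : ℕ → ℝ} (hm : ∀ N, 0 ≤ m N)
    (hT : ∀ N, 0 < T N) (hmg : ∀ N, m N ≤ g N)
    (h : 0 < liminf (fun N => m N / T N) atTop) :
    ∃ C : ℝ, 0 < C ∧ ∃ N₀ : ℕ, ∀ N, N₀ ≤ N → T N ≤ C * g N := by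
  set c := liminf (fun N => m N / T N) atTop
  have hbdd : IsBoundedUnder (· ≥ ·) atTop (fun N => m N / T N) :=
    isBoundedUnder_of ⟨0, fun N => div_nonneg (hm N) (hT N).le⟩
  obtain ⟨N₀, hN₀⟩ := eventually_atTop.mp (eventually_lt_of_lt_liminf (half_lt_self h) hbdd)
  refine ⟨2 / c, by positivity, N₀, fun N hN => ?_⟩
  have hlt : c / 2 * T N < m N := (lt_div_iff₀ (hT N)).mp (hN₀ N hN)
  rw [div_mul_eq_mul_div, le_div_iff₀ h]
  linarith [hmg N]

/-- With `m(N) = N/2 + log₂ C(N, ⌊N/2⌋)` bits per symbol of the optimal OFDM-IM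
configuration, if the spectro-computational throughput `m(N)/T(N)` of a mapper with
positive cost `T` does not vanish (`liminf > 0`), then `T(N) = O(N)`. -/
theorem ofdm_im_mapper_upper_bound_big_O_N
    (m : ℕ → ℝ) (hm : ∀ N : ℕ, m N = (N : ℝ) / 2 + Real.logb 2 (N.choose (N / 2)))
    (T : ℕ → ℝ) (hTpos : ∀ N : ℕ, 0 < T N)
    (h : 0 < Filter.liminf (fun N : ℕ => m N / T N) atTop) :
    ∃ C : ℝ, 0 < C ∧ ∃ N₀ : ℕ, ∀ N : ℕ, N₀ ≤ N → T N ≤ C * N := by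
  have hm_nonneg : ∀ N, 0 ≤ m N := fun N => by
    rw [hm N]
    linarith [Real.logb_two_natCast_choose_nonneg N (N / 2), (N.cast_nonneg : (0 : ℝ) ≤ N)]
  have hm_le : ∀ N, m N ≤ 3 / 2 * (N : ℝ) := fun N => by
    rw [hm N]
    linarith [Real.logb_two_natCast_choose_le N (N / 2)]
  obtain ⟨C, hC, N₀, hN₀⟩ := exists_le_mul_of_liminf_div_pos hm_nonneg hTpos hm_le h
  exact ⟨C * (3 / 2), by positivity, N₀, fun N hN => by rw [mul_assoc]; exact hN₀ N hN⟩
end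

section
/- Let m(N) = N/2 + log₂ C(N, ⌊N/2⌋) be the number of bits per symbol of the optimal OFDM-IM configuration, and let T : ℕ → ℝ be a function with T(N) ≥ m(N) − 1 for all N (any implementation must read its input) and liminf_{N→∞} m(N)/T(N) > 0 (the spectro-computational throughput does not vanish). Then T(N) = Θ(N): there exist constants c₁, c₂ > 0 and an index N₀ such that c₁·N ≤ T(N) ≤ c₂·N for all N ≥ N₀. -/
/-!
Since `1 ≤ C(N, ⌊N/2⌋) ≤ 2^N`, the bit count satisfies `N/2 ≤ m(N) ≤ 3N/2`. Reading the input
forces `T(N) ≥ m(N) - 1 ≥ N/4` for `N ≥ 4`, and a positive liminf `L` of `m/T` gives eventually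
`T(N) ≤ (2/L) m(N) ≤ (3/L) N`.
-/

open Filter

lemma logb_two_choose_nonneg {n k : ℕ} (hk : k ≤ n) : 0 ≤ Real.logb 2 (n.choose k) :=
  Real.logb_nonneg one_lt_two (by exact_mod_cast Nat.choose_pos hk)

lemma logb_two_choose_le {n k : ℕ} (hk : k ≤ n) : Real.logb 2 (n.choose k) ≤ n :=
  calc Real.logb 2 (n.choose k) ≤ Real.logb 2 ((2 : ℝ) ^ n) :=
        Real.logb_le_logb_of_le one_lt_two (by exact_mod_cast Nat.choose_pos hk)
          (by exact_mod_cast Nat.choose_le_two_pow n k)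
    _ = n := by simp [Real.logb_pow]

lemma Filter.exists_pos_eventually_le_mul_of_liminf_div_pos {α : Type*} {l : Filter α}
    {u v : α → ℝ} (hu : ∀ᶠ a in l, 0 ≤ u a) (hv : ∀ᶠ a in l, 0 < v a)
    (h : 0 < liminf (fun a => u a / v a) l) :
    ∃ C, 0 < C ∧ ∀ᶠ a in l, v a ≤ C * u a := by
  set L := liminf (fun a => u a / v a) l
  have hbdd : IsBoundedUnder (· ≥ ·) l (fun a => u a / v a) :=
    isBoundedUnder_of_eventually_ge <| (hu.and hv).mono fun a ha => div_nonneg ha.1 ha.2.le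
  refine ⟨2 / L, by positivity, ?_⟩
  filter_upwards [eventually_lt_of_lt_liminf (half_lt_self h) hbdd, hv] with a hlt hva
  rw [lt_div_iff₀ hva] at hlt
  rw [div_mul_eq_mul_div, le_div_iff₀ h]
  linarith

/-- Required OFDM-IM mapping complexity: with `m(N) = N/2 + log₂ C(N, ⌊N/2⌋)`, if the
mapper cost satisfies `T(N) ≥ m(N) − 1` (it must read its input) and its
spectro-computational throughput does not vanish (`liminf m(N)/T(N) > 0`), then
`T(N) = Θ(N)`. -/
theorem ofdm_im_mapper_theta_N
    (m : ℕ → ℝ) (hm : ∀ N : ℕ, m N = (N : ℝ) / 2 + Real.logb 2 (N.choose (N / 2)))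
    (T : ℕ → ℝ) (hT : ∀ N : ℕ, T N ≥ m N - 1)
    (h : 0 < Filter.liminf (fun N : ℕ => m N / T N) atTop) :
    ∃ c₁ : ℝ, 0 < c₁ ∧ ∃ c₂ : ℝ, 0 < c₂ ∧ ∃ N₀ : ℕ, ∀ N : ℕ, N₀ ≤ N →
      c₁ * N ≤ T N ∧ T N ≤ c₂ * N := by
  have hm_lower (N : ℕ) : (N : ℝ) / 2 ≤ m N := by
    rw [hm]; linarith [logb_two_choose_nonneg (Nat.div_le_self N 2)]
  have hm_upper (N : ℕ) : m N ≤ 3 / 2 * N := by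
    rw [hm]; linarith [logb_two_choose_le (Nat.div_le_self N 2)]
  have hT_lower : ∀ᶠ N : ℕ in atTop, (N : ℝ) / 4 ≤ T N ∧ 0 < T N := by
    filter_upwards [eventually_ge_atTop 4] with N hN
    have : (4 : ℝ) ≤ N := by exact_mod_cast hN
    constructor <;> linarith [hT N, hm_lower N]
  obtain ⟨C, hC, hT_upper⟩ := exists_pos_eventually_le_mul_of_liminf_div_pos
    (.of_forall fun N : ℕ => (by positivity : (0 : ℝ) ≤ N / 2).trans (hm_lower N))
    (hT_lower.mono fun _ hN => hN.2) h
  obtain ⟨N₀, hN₀⟩ := eventually_atTop.mp (hT_lower.and hT_upper)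
  refine ⟨1 / 4, by norm_num, C * (3 / 2), by positivity, N₀, fun N hN => ?_⟩
  obtain ⟨⟨hlo, -⟩, hup⟩ := hN₀ N hN
  constructor
  · linarith
  · nlinarith [hm_upper N]
end

section
/- (Greedy step of Combinadic unranking.) Let k ≥ 1 and let X be a natural number. Let c be the greatest natural number satisfying C(c, k) ≤ X (such a maximum exists whenever X < C(n, k) for some n, since c ↦ C(c,k) is unbounded and C(k−1,k) = 0 ≤ X). Then the remainder satisfies X − C(c, k) < C(c, k−1). Consequently, the next greedily chosen coefficient c' (the greatest natural with C(c', k−1) ≤ X − C(c,k)) satisfies c' < c, so the Combinadic unranking algorithm outputs strictly decreasing coefficients. -/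
theorem Nat.sub_choose_lt_choose_of_lt_succ_choose {n k X : ℕ} (h₁ : n.choose (k + 1) ≤ X)
    (h₂ : X < (n + 1).choose (k + 1)) : X - n.choose (k + 1) < n.choose k := by
  rw [Nat.choose_succ_succ'] at h₂
  omega

theorem Nat.lt_of_choose_le_of_lt_choose {a b k Y : ℕ} (ha : a.choose k ≤ Y)
    (hb : Y < b.choose k) : a < b := by
  by_contra! hab
  exact (ha.trans_lt hb).not_ge (Nat.choose_le_choose k hab)

theorem combinadic_greedy_step_general
    (k X c : ℕ) (hc₁ : c.choose k ≤ X) (hc₂ : X < (c + 1).choose k) :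
    X - c.choose k < c.choose (k - 1) ∧
    ∀ c' : ℕ, c'.choose (k - 1) ≤ X - c.choose k →
      X - c.choose k < (c' + 1).choose (k - 1) → c' < c := by
  cases k with
  | zero => simp only [Nat.choose_zero_right] at hc₁ hc₂; omega
  | succ m =>
    have hrem := Nat.sub_choose_lt_choose_of_lt_succ_choose hc₁ hc₂
    exact ⟨hrem, fun c' hc' _ => Nat.lt_of_choose_le_of_lt_choose hc' hrem⟩

/-- Greedy step of Combinadic unranking: if `c` is the greatest natural number with
`C(c,k) ≤ X` (expressed as `C(c,k) ≤ X < C(c+1,k)`), then the remainder satisfies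
`X − C(c,k) < C(c,k−1)`; consequently the next greedily chosen coefficient `c'`
(the greatest natural with `C(c',k−1) ≤ X − C(c,k)`) satisfies `c' < c`. -/
theorem combinadic_greedy_step
    (k X c : ℕ) (hk : 1 ≤ k) (hc₁ : c.choose k ≤ X) (hc₂ : X < (c + 1).choose k) :
    X - c.choose k < c.choose (k - 1) ∧
    ∀ c' : ℕ, c'.choose (k - 1) ≤ X - c.choose k →
      X - c.choose k < (c' + 1).choose (k - 1) → c' < c :=
  combinadic_greedy_step_general k X c hc₁ hc₂
end
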